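/- arXiv:1304.3484 — 2 statements merged into one kernel-verified Lean document; each statement's English description precedes it below -/
import Mathlib

section
/- Let h>0, α,β∈(0,1], d≥1, let A be a real d×d matrix and x_a, x_0∈ℝ^d. Then the unique solution of the linear sequential Caputo initial value problem (C_β(C_α X))(n) = A·X(n), X(0)=x_a, (C_α X)(0)=x_0 is given for every n∈ℕ by the (finite) series X(n) = ∑_{k=0}^{n} A^k·( φ_{k,k}(n−k)·x_a + φ_{k+1,k}(n−k)·x_0 ), where all terms with 2k>n vanish because φ_{k,k}(n−k)=0 for n<2k and φ_{k+1,k}(n−k)=0 for n<2k+1. -/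
/-- `c γ m = Γ(γ+m)/(Γ(γ)·Γ(m+1))`. -/
noncomputable def cCoeff (γ : ℝ) (m : ℕ) : ℝ :=
  Real.Gamma (γ + m) / (Real.Gamma γ * Real.Gamma (m + 1))

/-- Caputo `h`-difference of order `α ∈ (0,1]` of an `ℝ^d`-valued sequence. -/
noncomputable def caputo (h α : ℝ) {d : ℕ} (u : ℕ → Fin d → ℝ) (n : ℕ) : Fin d → ℝ :=
  if α < 1 then
    h ^ (1 - α) • ∑ k ∈ Finset.range (n + 1), cCoeff (1 - α) (n - k) • (h⁻¹ • (u (k + 1) - u k))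
  else h⁻¹ • (u (n + 1) - u n)

/-- `X` solves the sequential Caputo initial value problem
`(C_β(C_α X))(n) = f(n, X(n))`, `X(0) = x_a`, `(C_α X)(0) = x_0`. -/
noncomputable def IsSolIVP (h α β : ℝ) {d : ℕ} (f : ℕ → (Fin d → ℝ) → Fin d → ℝ)
    (xa x0 : Fin d → ℝ) (X : ℕ → Fin d → ℝ) : Prop :=
  (∀ n : ℕ, caputo h β (caputo h α X) n = f n (X n)) ∧ X 0 = xa ∧ caputo h α X 0 = x0

/-- The function `φ_{k,s}` of the paper. -/
noncomputable def phi (h α β : ℝ) (k s : ℕ) (n : ℤ) : ℝ :=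
  if (k : ℤ) ≤ n then
    Real.Gamma ((n : ℝ) - (k : ℝ) + 1 + (k : ℝ) * α + (s : ℝ) * β)
      / (Real.Gamma ((k : ℝ) * α + (s : ℝ) * β + 1) * Real.Gamma ((n : ℝ) - (k : ℝ) + 1))
      * h ^ ((k : ℝ) * α + (s : ℝ) * β)
  else 0

/-!
Write the Caputo difference as `h^{-α}` times the convolution of the forward difference with the
coefficients `c_{1-α}`. For the discrete power functions `E_{μ,j}(n) = c_{μ+1}(n - j) h^μ`
(`n ≥ j`; `powerSeq h μ j` below), the forward difference of `E_{μ,j+1}` is `c_μ(· - j) h^μ`,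
so the Chu–Vandermonde identity `c_a ⋆ c_b = c_{a+b}` gives the power rule
`C_α E_{μ+α,j+1} = E_{μ,j}`. Hence `C_β ∘ C_α` sends the `(k+1)`-st term of the series to `A`
applied to the `k`-th one and kills the `0`-th, so the series solves the problem. It is the only
solution, because the top coefficient of `(C_α u)(n)` is `h^{-α} ≠ 0`, so `u(n+1)` is determined
by `u(0), …, u(n)` and `(C_α u)(n)`.
-/

open Finset

theorem Ring.multichoose_add {R : Type*} [CommRing R] [BinomialRing R] (r s : R) (k : ℕ) :
    multichoose (r + s) k = ∑ ij ∈ antidiagonal k, multichoose r ij.1 * multichoose s ij.2 := by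
  have h := add_choose_eq (r := -r) (s := -s) k (Commute.all _ _)
  simp only [← neg_add, choose_neg', smul_mul_smul_comm] at h
  rw [sum_congr rfl fun ij hij => by
    rw [← Int.negOnePow_add, ← Nat.cast_add, mem_antidiagonal.1 hij], ← smul_sum] at h
  simpa using h

theorem Real.Gamma_add_nat_eq_mul_ascPochhammer {γ : ℝ} (hγ : 0 < γ) (m : ℕ) :
    Gamma (γ + m) = Gamma γ * (ascPochhammer ℝ m).eval γ := by
  induction m with
  | zero => simp
  | succ m ih =>
    rw [ascPochhammer_succ_eval, Nat.cast_succ, ← add_assoc, Gamma_add_one (by positivity), ih]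
    ring

theorem cCoeff_eq_multichoose {γ : ℝ} (hγ : 0 < γ) (m : ℕ) :
    cCoeff γ m = Ring.multichoose γ m := by
  have hfac := Ring.factorial_nsmul_multichoose_eq_ascPochhammer γ m
  rw [Polynomial.ascPochhammer_smeval_eq_eval, nsmul_eq_mul] at hfac
  rw [cCoeff, Real.Gamma_nat_eq_factorial, Real.Gamma_add_nat_eq_mul_ascPochhammer hγ, ← hfac,
    mul_div_mul_left _ _ (Real.Gamma_pos_of_pos hγ).ne']
  field_simp

section CaputoLin

variable {M : Type*} [AddCommGroup M] [Module ℝ M]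

/-- With `multichoose (1 - α)` in place of `cCoeff (1 - α)` this formula also covers `α = 1`:
`multichoose 0` is the Kronecker delta, whereas `cCoeff 0` is junk since `Γ 0 = 0` in Mathlib. -/
noncomputable def caputoLin (h α : ℝ) : (ℕ → M) →ₗ[ℝ] (ℕ → M) where
  toFun u n := h ^ (-α) • ∑ k ∈ range (n + 1), Ring.multichoose (1 - α) (n - k) • (u (k + 1) - u k)
  map_add' u v := by
    ext n
    simp only [Pi.add_apply, add_sub_add_comm, smul_add, sum_add_distrib]
  map_smul' c u := by
    ext n
    simp only [Pi.smul_apply, ← smul_sub, smul_comm _ c, ← smul_sum, RingHom.id_apply]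

theorem caputoLin_apply (h α : ℝ) (u : ℕ → M) (n : ℕ) :
    caputoLin h α u n =
      h ^ (-α) • ∑ k ∈ range (n + 1), Ring.multichoose (1 - α) (n - k) • (u (k + 1) - u k) :=
  rfl

theorem caputo_eq_caputoLin {h α : ℝ} (hh : 0 < h) (hα : α ≤ 1) {d : ℕ} (u : ℕ → Fin d → ℝ) :
    caputo h α u = caputoLin h α u := by
  ext1 n
  rw [caputoLin_apply, caputo]
  split_ifs with hα1
  · have hpow : h ^ (1 - α) * h⁻¹ = h ^ (-α) := by
      rw [← Real.rpow_neg_one, ← Real.rpow_add hh]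
      ring_nf
    simp only [← hpow, mul_smul, smul_sum, cCoeff_eq_multichoose (sub_pos.2 hα1)]
    refine sum_congr rfl fun k _ => ?_
    rw [smul_comm h⁻¹ (Ring.multichoose _ _)]
  · obtain rfl : α = 1 := le_antisymm hα (not_lt.1 hα1)
    rw [sum_range_succ, sum_eq_zero fun k hk => ?_]
    · simp [Real.rpow_neg_one]
    · obtain ⟨j, hj⟩ : ∃ j, n - k = j + 1 := ⟨n - k - 1, by grind⟩
      rw [hj, sub_self, Ring.multichoose_zero_succ, zero_smul]

theorem caputoLin_congr (h α : ℝ) {u v : ℕ → M} {n : ℕ} (huv : ∀ k ≤ n + 1, u k = v k) :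
    caputoLin h α u n = caputoLin h α v n := by
  simp only [caputoLin_apply]
  congr 1
  refine sum_congr rfl fun k hk => ?_
  have hk : k < n + 1 := mem_range.1 hk
  rw [huv k (by omega), huv (k + 1) (by omega)]

theorem caputoLin_caputoLin_congr (h α β : ℝ) {u v : ℕ → M} {n : ℕ}
    (huv : ∀ k ≤ n + 2, u k = v k) :
    caputoLin h β (caputoLin h α u) n = caputoLin h β (caputoLin h α v) n :=
  caputoLin_congr h β fun _ hk => caputoLin_congr h α fun i hi => huv i (by omega)

theorem caputoLin_apply_eq_zero (h α : ℝ) {u : ℕ → M} {n : ℕ} (hu : ∀ k ≤ n + 1, u k = 0) :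
    caputoLin h α u n = 0 := by
  rw [caputoLin_congr h α (v := 0) hu, map_zero, Pi.zero_apply]

theorem caputoLin_apply_of_eq_zero (h α : ℝ) {u : ℕ → M} {n : ℕ} (hu : ∀ k ≤ n, u k = 0) :
    caputoLin h α u n = h ^ (-α) • u (n + 1) := by
  rw [caputoLin_apply, sum_range_succ, sum_eq_zero fun k hk => ?_]
  · simp [hu n le_rfl]
  · have hk : k < n := mem_range.1 hk
    rw [hu k hk.le, hu (k + 1) hk, sub_zero, smul_zero]

theorem eq_of_caputoLin_eq {h : ℝ} (hh : 0 < h) (α : ℝ) {u v : ℕ → M} {n : ℕ}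
    (huv : ∀ k ≤ n, u k = v k) (hD : caputoLin h α u n = caputoLin h α v n) :
    u (n + 1) = v (n + 1) := by
  have hsub : caputoLin h α (u - v) n = h ^ (-α) • (u - v) (n + 1) :=
    caputoLin_apply_of_eq_zero h α fun k hk => sub_eq_zero.2 (huv k hk)
  rw [map_sub, Pi.sub_apply, hD, sub_self, eq_comm, smul_eq_zero] at hsub
  exact sub_eq_zero.1 (hsub.resolve_left (Real.rpow_pos_of_pos hh _).ne')

theorem caputoLin_const (h α : ℝ) (v : M) : caputoLin h α (fun _ => v) = 0 := by
  ext n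
  simp [caputoLin_apply]

theorem caputoLin_smul_add_smul (h α : ℝ) (p q : ℕ → ℝ) (v w : M) :
    caputoLin h α (fun m => p m • v + q m • w) =
      fun n => caputoLin h α p n • v + caputoLin h α q n • w := by
  ext n
  simp only [caputoLin_apply, smul_eq_mul, add_sub_add_comm, ← sub_smul, smul_add,
    sum_add_distrib, mul_smul, sum_smul]

theorem eq_of_caputoLin_ivp {h : ℝ} (hh : 0 < h) (α β : ℝ) (f : ℕ → M → M) {X Y : ℕ → M}
    (hX : ∀ n, caputoLin h β (caputoLin h α X) n = f n (X n))
    (hY : ∀ n, caputoLin h β (caputoLin h α Y) n = f n (Y n))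
    (h₀ : X 0 = Y 0) (h₀' : caputoLin h α X 0 = caputoLin h α Y 0) : X = Y := by
  suffices key : ∀ n, ∀ k ≤ n, X k = Y k ∧ caputoLin h α X k = caputoLin h α Y k from
    funext fun n => (key n n le_rfl).1
  intro n
  induction n with
  | zero =>
    intro k hk
    obtain rfl := Nat.le_zero.1 hk
    exact ⟨h₀, h₀'⟩
  | succ n ih =>
    have hX' : X (n + 1) = Y (n + 1) :=
      eq_of_caputoLin_eq hh α (fun k hk => (ih k hk).1) (ih n le_rfl).2
    have hDX' : caputoLin h α X (n + 1) = caputoLin h α Y (n + 1) :=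
      eq_of_caputoLin_eq hh β (fun k hk => (ih k hk).2) (by rw [hX, hY, (ih n le_rfl).1])
    intro k hk
    rcases Nat.lt_or_eq_of_le hk with hk | rfl
    · exact ih k (by omega)
    · exact ⟨hX', hDX'⟩

end CaputoLin

theorem IsSolIVP.unique {h α β : ℝ} (hh : 0 < h) (hα : α ≤ 1) (hβ : β ≤ 1) {d : ℕ}
    {f : ℕ → (Fin d → ℝ) → Fin d → ℝ} {xa x0 : Fin d → ℝ} {X Y : ℕ → Fin d → ℝ}
    (hX : IsSolIVP h α β f xa x0 X) (hY : IsSolIVP h α β f xa x0 Y) : X = Y := by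
  simp only [IsSolIVP, caputo_eq_caputoLin hh hα, caputo_eq_caputoLin hh hβ] at hX hY
  exact eq_of_caputoLin_ivp hh α β f hX.1 hY.1 (hX.2.1.trans hY.2.1.symm)
    (hX.2.2.trans hY.2.2.symm)

/-- The `h`-discrete analogue of `(t - j h)^μ / Γ(μ + 1)`. -/
noncomputable def powerSeq (h μ : ℝ) (j n : ℕ) : ℝ :=
  if j ≤ n then Ring.multichoose (μ + 1) (n - j) * h ^ μ else 0

theorem powerSeq_of_lt (h μ : ℝ) {j n : ℕ} (hn : n < j) : powerSeq h μ j n = 0 :=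
  if_neg (not_le.2 hn)

theorem powerSeq_zero_zero (h : ℝ) : powerSeq h 0 0 = fun _ => 1 := by
  ext n
  simp [powerSeq]

theorem powerSeq_succ_sub_powerSeq (h μ : ℝ) (j k : ℕ) :
    powerSeq h μ (j + 1) (k + 1) - powerSeq h μ (j + 1) k =
      if j ≤ k then Ring.multichoose μ (k - j) * h ^ μ else 0 := by
  rcases lt_or_ge k j with hkj | hjk
  · rw [powerSeq_of_lt h μ (by omega), powerSeq_of_lt h μ (by omega), if_neg (by omega), sub_zero]
  obtain ⟨i, rfl⟩ := exists_add_of_le hjk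
  rw [if_pos hjk, powerSeq, if_pos (by omega), Nat.add_sub_add_right, Nat.add_sub_cancel_left]
  rcases i with _ | i
  · rw [powerSeq_of_lt h μ (by omega)]
    simp
  · rw [powerSeq, if_pos (by omega), show j + (i + 1) - (j + 1) = i by omega,
      Ring.multichoose_succ_succ, ← sub_mul, add_sub_cancel_right]

theorem caputoLin_powerSeq {h : ℝ} (hh : 0 < h) (α μ : ℝ) (j : ℕ) :
    caputoLin h α (powerSeq h (μ + α) (j + 1)) = powerSeq h μ j := by
  ext n
  simp only [caputoLin_apply, powerSeq_succ_sub_powerSeq, smul_eq_mul]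
  rcases lt_or_ge n j with hnj | hjn
  · rw [powerSeq_of_lt h μ hnj, sum_eq_zero fun k hk => ?_, mul_zero]
    rw [if_neg (by have := mem_range.1 hk; omega), mul_zero]
  obtain ⟨m, rfl⟩ := exists_add_of_le hjn
  have hvdm : Ring.multichoose (μ + 1) m =
      ∑ i ∈ range (m + 1), Ring.multichoose (μ + α) i * Ring.multichoose (1 - α) (m - i) := by
    rw [← Nat.sum_antidiagonal_eq_sum_range_succ
      (fun i l => Ring.multichoose (μ + α) i * Ring.multichoose (1 - α) l),
      ← Ring.multichoose_add, add_add_sub_cancel]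
  have hpow : h ^ (-α) * h ^ (μ + α) = h ^ μ := by
    rw [← Real.rpow_add hh, neg_add_cancel_comm_assoc]
  rw [powerSeq, if_pos hjn, Nat.add_sub_cancel_left, add_assoc, sum_range_add,
    sum_eq_zero fun k hk => by rw [if_neg (by have := mem_range.1 hk; omega), mul_zero],
    zero_add, hvdm, sum_mul, mul_sum]
  refine sum_congr rfl fun i _ => ?_
  rw [if_pos (by omega), Nat.add_sub_add_left, Nat.add_sub_cancel_left, ← hpow]
  ring

theorem phi_eq_powerSeq (h : ℝ) {α β : ℝ} (hα : 0 ≤ α) (hβ : 0 ≤ β) (k s n : ℕ) :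
    phi h α β k s ((n : ℤ) - s) = powerSeq h (k * α + s * β) (k + s) n := by
  unfold phi powerSeq
  by_cases hks : k + s ≤ n
  · rw [if_pos (by omega), if_pos hks, ← cCoeff_eq_multichoose (by positivity), cCoeff]
    have hm : (((n : ℤ) - s : ℤ) : ℝ) - k = (n - (k + s) : ℕ) := by
      push_cast [Nat.cast_sub hks]
      ring
    rw [hm]
    congr 3
    ring
  · rw [if_neg (by omega), if_neg hks]

section LinearIVP

variable {M : Type*} [AddCommGroup M] [Module ℝ M] (h α β : ℝ) (A : Module.End ℝ M) (xa x0 : M)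

noncomputable def ivpTerm (k : ℕ) : ℕ → M := fun n =>
  powerSeq h (k * α + k * β) (k + k) n • (A ^ k) xa
    + powerSeq h ((k + 1) * α + k * β) (k + 1 + k) n • (A ^ k) x0

noncomputable def ivpSol (n : ℕ) : M := ∑ k ∈ range (n + 1), ivpTerm h α β A xa x0 k n

theorem ivpTerm_of_lt {k n : ℕ} (hn : n < k + k) : ivpTerm h α β A xa x0 k n = 0 := by
  simp [ivpTerm, powerSeq_of_lt h _ hn, powerSeq_of_lt h _ (show n < k + 1 + k by omega)]

theorem ivpSol_eq_sum_range {n N : ℕ} (hN : n < N) :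
    ivpSol h α β A xa x0 n = ∑ k ∈ range N, ivpTerm h α β A xa x0 k n :=
  sum_subset (range_subset_range.2 hN) fun k _ hk =>
    ivpTerm_of_lt h α β A xa x0 (by simp at hk; omega)

theorem ivpSol_zero : ivpSol h α β A xa x0 0 = xa := by
  simp [ivpSol, ivpTerm, powerSeq_zero_zero, powerSeq_of_lt]

variable {h}

theorem caputoLin_ivpTerm_zero (hh : 0 < h) :
    caputoLin h α (ivpTerm h α β A xa x0 0) = fun _ => x0 := by
  unfold ivpTerm
  simp only [Nat.cast_zero, zero_mul, add_zero, pow_zero, Module.End.one_apply]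
  have e : powerSeq h ((0 + 1) * α) (0 + 1) = powerSeq h (0 + α) (0 + 1) := by
    congr 1
    ring
  rw [caputoLin_smul_add_smul, powerSeq_zero_zero, caputoLin_const, e, caputoLin_powerSeq hh,
    powerSeq_zero_zero]
  simp

theorem caputoLin_caputoLin_ivpTerm_succ (hh : 0 < h) (k : ℕ) :
    caputoLin h β (caputoLin h α (ivpTerm h α β A xa x0 (k + 1))) =
      fun n => A (ivpTerm h α β A xa x0 k n) := by
  have e₁ : powerSeq h (↑(k + 1) * α + ↑(k + 1) * β) (k + 1 + (k + 1)) =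
      powerSeq h (k * α + k * β + β + α) (k + k + 1 + 1) := by
    congr 1
    · push_cast
      ring
    · ring
  have e₂ : powerSeq h ((↑(k + 1) + 1) * α + ↑(k + 1) * β) (k + 1 + 1 + (k + 1)) =
      powerSeq h ((k + 1) * α + k * β + β + α) (k + 1 + k + 1 + 1) := by
    congr 1
    · push_cast
      ring
    · ring
  unfold ivpTerm
  rw [e₁, e₂, caputoLin_smul_add_smul, caputoLin_powerSeq hh, caputoLin_powerSeq hh,
    caputoLin_smul_add_smul, caputoLin_powerSeq hh, caputoLin_powerSeq hh]
  ext n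
  simp [pow_succ']

theorem caputoLin_caputoLin_ivpSol (hh : 0 < h) (n : ℕ) :
    caputoLin h β (caputoLin h α (ivpSol h α β A xa x0)) n = A (ivpSol h α β A xa x0 n) := by
  rw [caputoLin_caputoLin_congr h α β (v := ∑ k ∈ range (n + 3), ivpTerm h α β A xa x0 k)
      fun m hm => by rw [ivpSol_eq_sum_range h α β A xa x0 (N := n + 3) (by omega),
        Finset.sum_apply],
    map_sum, map_sum, Finset.sum_apply, sum_range_succ', caputoLin_ivpTerm_zero α β A xa x0 hh,
    caputoLin_const, Pi.zero_apply, add_zero,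
    ivpSol_eq_sum_range h α β A xa x0 (N := n + 2) (by omega), map_sum]
  exact sum_congr rfl fun k _ => congrFun (caputoLin_caputoLin_ivpTerm_succ α β A xa x0 hh k) n

theorem caputoLin_ivpSol_zero (hh : 0 < h) : caputoLin h α (ivpSol h α β A xa x0) 0 = x0 := by
  rw [caputoLin_congr h α (v := ∑ k ∈ range 2, ivpTerm h α β A xa x0 k)
      fun m hm => by rw [ivpSol_eq_sum_range h α β A xa x0 (N := 2) (by omega),
        Finset.sum_apply],
    map_sum, Finset.sum_apply, sum_range_succ, sum_range_one, caputoLin_ivpTerm_zero α β A xa x0 hh,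
    caputoLin_apply_eq_zero h α fun m hm => ivpTerm_of_lt h α β A xa x0 (by omega), add_zero]

end LinearIVP

theorem isSolIVP_ivpSol {h α β : ℝ} (hh : 0 < h) (hα : α ≤ 1) (hβ : β ≤ 1) {d : ℕ}
    (A : Matrix (Fin d) (Fin d) ℝ) (xa x0 : Fin d → ℝ) :
    IsSolIVP h α β (fun _ x => A.mulVec x) xa x0
      (ivpSol h α β (Matrix.toLinAlgEquiv' A) xa x0) := by
  simp only [IsSolIVP, caputo_eq_caputoLin hh hα, caputo_eq_caputoLin hh hβ]
  exact ⟨caputoLin_caputoLin_ivpSol α β _ xa x0 hh, ivpSol_zero h α β _ xa x0,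
    caputoLin_ivpSol_zero α β _ xa x0 hh⟩

theorem linear_ivp_solution_general (h α β : ℝ) (hh : 0 < h)
    (hα1 : 0 < α) (hα2 : α ≤ 1) (hβ1 : 0 < β) (hβ2 : β ≤ 1)
    (d : ℕ) (A : Matrix (Fin d) (Fin d) ℝ) (xa x0 : Fin d → ℝ)
    (X : ℕ → Fin d → ℝ) (hX : IsSolIVP h α β (fun _ x => A.mulVec x) xa x0 X) (n : ℕ) :
    X n = ∑ k ∈ Finset.range (n + 1),
      (A ^ k).mulVec
        (phi h α β k k ((n : ℤ) - (k : ℤ)) • xa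
          + phi h α β (k + 1) k ((n : ℤ) - (k : ℤ)) • x0) := by
  rw [hX.unique hh hα2 hβ2 (isSolIVP_ivpSol hh hα2 hβ2 A xa x0), ivpSol]
  refine sum_congr rfl fun k _ => ?_
  simp only [ivpTerm, phi_eq_powerSeq h hα1.le hβ1.le, Nat.cast_succ, Matrix.mulVec_add,
    Matrix.mulVec_smul, ← map_pow, Matrix.toLinAlgEquiv'_apply]

theorem linear_ivp_solution (h α β : ℝ) (hh : 0 < h)
    (hα1 : 0 < α) (hα2 : α ≤ 1) (hβ1 : 0 < β) (hβ2 : β ≤ 1)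
    (d : ℕ) (hd : 1 ≤ d) (A : Matrix (Fin d) (Fin d) ℝ) (xa x0 : Fin d → ℝ)
    (X : ℕ → Fin d → ℝ) (hX : IsSolIVP h α β (fun _ x => A.mulVec x) xa x0 X) (n : ℕ) :
    X n = ∑ k ∈ Finset.range (n + 1),
      (A ^ k).mulVec
        (phi h α β k k ((n : ℤ) - (k : ℤ)) • xa
          + phi h α β (k + 1) k ((n : ℤ) - (k : ℤ)) • x0) :=
  linear_ivp_solution_general h α β hh hα1 hα2 hβ1 hβ2 d A xa x0 X hX n
end

section
/- Let h>0, α,β∈(0,1], d≥1, let A be a real d×d matrix all of whose entries are nonnegative, and let γ: ℕ→ℝ^d satisfy γ(n)∈ℝ^d_≥ for all n∈ℕ. Then the semilinear sequential Caputo system is positive: for all x_a, x_0∈ℝ^d_≥, the unique solution X of the initial value problem (C_β(C_α X))(n) = A·X(n) + γ(n), X(0)=x_a, (C_α X)(0)=x_0 satisfies X(n)∈ℝ^d_≥ for every n∈ℕ. -/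
/-!
Since `c_γ(0) = 1` and, for `γ = 1 - α ∈ (0, 1]`, the coefficients `c_γ(m)` are positive and
nonincreasing in `m`, Abel summation expresses `u(n+1)` as a nonnegative combination of
`(C_α u)(n)` and `u(0), …, u(n)`. Hence nonnegativity of `C_α u` propagates from the past of `u`
to its next value. Applied to `X` and to `C_α X` in alternation, with
`(C_β (C_α X))(n) = A X(n) + γ(n) ≥ 0`, this gives `X(n) ≥ 0` by induction on `n`.
-/

open Finset

lemma cCoeff_pos {γ : ℝ} (hγ : 0 < γ) (m : ℕ) : 0 < cCoeff γ m := by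
  unfold cCoeff
  have := Real.Gamma_pos_of_pos (show 0 < γ + m by positivity)
  have := Real.Gamma_pos_of_pos hγ
  have := Real.Gamma_pos_of_pos (show (0 : ℝ) < m + 1 by positivity)
  positivity

lemma cCoeff_zero {γ : ℝ} (hγ : 0 < γ) : cCoeff γ 0 = 1 := by
  simp [cCoeff, (Real.Gamma_pos_of_pos hγ).ne']

lemma cCoeff_succ {γ : ℝ} (hγ : 0 < γ) (m : ℕ) :
    cCoeff γ (m + 1) = cCoeff γ m * ((γ + m) / (m + 1)) := by
  unfold cCoeff
  have hΓγ := (Real.Gamma_pos_of_pos hγ).ne'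
  have hΓm := (Real.Gamma_pos_of_pos (show (0 : ℝ) < m + 1 by positivity)).ne'
  push_cast
  rw [← add_assoc, Real.Gamma_add_one (by positivity), Real.Gamma_add_one (by positivity)]
  field_simp

lemma cCoeff_succ_le {γ : ℝ} (hγ₀ : 0 < γ) (hγ₁ : γ ≤ 1) (m : ℕ) :
    cCoeff γ (m + 1) ≤ cCoeff γ m := by
  rw [cCoeff_succ hγ₀]
  have : (γ + m) / (m + 1) ≤ 1 := (div_le_one (by positivity)).2 (by linarith)
  exact mul_le_of_le_one_right (cCoeff_pos hγ₀ m).le this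

lemma sum_range_mul_sub_eq (c u : ℕ → ℝ) (n : ℕ) :
    ∑ k ∈ range (n + 1), c (n - k) * (u (k + 1) - u k)
      = c 0 * u (n + 1) - c n * u 0 - ∑ k ∈ range n, (c (n - k - 1) - c (n - k)) * u (k + 1) := by
  have hreindex : ∑ k ∈ range n, c (n - (k + 1)) * u (k + 1)
      = ∑ k ∈ range n, c (n - k - 1) * u (k + 1) := by
    refine sum_congr rfl fun k _ => ?_
    rw [Nat.sub_succ']
  simp only [mul_sub, sub_mul, sum_sub_distrib]
  rw [sum_range_succ (fun k => c (n - k) * u (k + 1)), sum_range_succ' (fun k => c (n - k) * u k),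
    hreindex, Nat.sub_self, Nat.sub_zero]
  ring

lemma nonneg_of_sum_cCoeff_mul_sub_nonneg {γ : ℝ} (hγ₀ : 0 < γ) (hγ₁ : γ ≤ 1) {u : ℕ → ℝ}
    {n : ℕ} (hu : ∀ k ≤ n, 0 ≤ u k)
    (hsum : 0 ≤ ∑ k ∈ range (n + 1), cCoeff γ (n - k) * (u (k + 1) - u k)) :
    0 ≤ u (n + 1) := by
  rw [sum_range_mul_sub_eq, cCoeff_zero hγ₀, one_mul] at hsum
  have hu₀ : 0 ≤ cCoeff γ n * u 0 := mul_nonneg (cCoeff_pos hγ₀ n).le (hu 0 n.zero_le)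
  have hrest : 0 ≤ ∑ k ∈ range n, (cCoeff γ (n - k - 1) - cCoeff γ (n - k)) * u (k + 1) := by
    refine sum_nonneg fun k hk => ?_
    have hk : k < n := mem_range.1 hk
    refine mul_nonneg ?_ (hu (k + 1) hk)
    have hnk : n - k = n - k - 1 + 1 := by omega
    rw [sub_nonneg, hnk, Nat.add_sub_cancel]
    exact cCoeff_succ_le hγ₀ hγ₁ _
  linarith

lemma caputo_apply_of_lt {h α : ℝ} (hα : α < 1) {d : ℕ} (u : ℕ → Fin d → ℝ) (n : ℕ) (i : Fin d) :
    caputo h α u n i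
      = h ^ (1 - α) * h⁻¹ * ∑ k ∈ range (n + 1), cCoeff (1 - α) (n - k) * (u (k + 1) i - u k i) := by
  simp only [caputo, if_pos hα, Pi.smul_apply, Finset.sum_apply, smul_eq_mul, Pi.sub_apply, mul_sum]
  exact sum_congr rfl fun k _ => by ring

lemma caputo_apply_of_le {h α : ℝ} (hα : 1 ≤ α) {d : ℕ} (u : ℕ → Fin d → ℝ) (n : ℕ) (i : Fin d) :
    caputo h α u n i = h⁻¹ * (u (n + 1) i - u n i) := by
  simp [caputo, not_lt.2 hα]

lemma caputo_nonneg_step {h α : ℝ} (hh : 0 < h) (hα : 0 ≤ α) {d : ℕ} {u : ℕ → Fin d → ℝ}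
    {n : ℕ} (hu : ∀ k ≤ n, 0 ≤ u k) (hcap : 0 ≤ caputo h α u n) : 0 ≤ u (n + 1) := by
  intro i
  have hcap : 0 ≤ caputo h α u n i := hcap i
  rcases lt_or_ge α 1 with hα₁ | hα₁
  · rw [caputo_apply_of_lt hα₁] at hcap
    exact nonneg_of_sum_cCoeff_mul_sub_nonneg (by linarith) (by linarith) (fun k hk => hu k hk i)
      ((mul_nonneg_iff_of_pos_left (by positivity)).1 hcap)
  · rw [caputo_apply_of_le hα₁] at hcap
    have := (mul_nonneg_iff_of_pos_left (inv_pos.2 hh)).1 hcap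
    exact (sub_nonneg.1 this).trans' (hu n le_rfl i)

theorem semilinear_ivp_positive_general (h α β : ℝ) (hh : 0 < h)
    (hα1 : 0 < α) (hβ1 : 0 < β)
    (d : ℕ) (A : Matrix (Fin d) (Fin d) ℝ) (hA : ∀ i j, 0 ≤ A i j)
    (γ : ℕ → Fin d → ℝ) (hγ : ∀ n : ℕ, ∀ i, 0 ≤ γ n i)
    (xa x0 : Fin d → ℝ) (hxa : ∀ i, 0 ≤ xa i) (hx0 : ∀ i, 0 ≤ x0 i)
    (X : ℕ → Fin d → ℝ) (hX : IsSolIVP h α β (fun n x => A.mulVec x + γ n) xa x0 X) :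
    ∀ n : ℕ, ∀ i, 0 ≤ X n i := by
  obtain ⟨hrhs, hX₀, hY₀⟩ := hX
  suffices key : ∀ n, 0 ≤ X n ∧ 0 ≤ caputo h α X n from fun n => (key n).1
  intro n
  induction n using Nat.strong_induction_on with
  | _ n ih =>
    rcases n with _ | n
    · exact ⟨hX₀ ▸ hxa, hY₀ ▸ hx0⟩
    have hrhs_nonneg : 0 ≤ A.mulVec (X n) + γ n :=
      add_nonneg (fun i => dotProduct_nonneg_of_nonneg (hA i) (ih n n.lt_succ_self).1) (hγ n)
    exact ⟨caputo_nonneg_step hh hα1.le (fun k hk => (ih k (by omega)).1) (ih n n.lt_succ_self).2,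
      caputo_nonneg_step hh hβ1.le (fun k hk => (ih k (by omega)).2) (hrhs n ▸ hrhs_nonneg)⟩

theorem semilinear_ivp_positive (h α β : ℝ) (hh : 0 < h)
    (hα1 : 0 < α) (hα2 : α ≤ 1) (hβ1 : 0 < β) (hβ2 : β ≤ 1)
    (d : ℕ) (hd : 1 ≤ d) (A : Matrix (Fin d) (Fin d) ℝ) (hA : ∀ i j, 0 ≤ A i j)
    (γ : ℕ → Fin d → ℝ) (hγ : ∀ n : ℕ, ∀ i, 0 ≤ γ n i)
    (xa x0 : Fin d → ℝ) (hxa : ∀ i, 0 ≤ xa i) (hx0 : ∀ i, 0 ≤ x0 i)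
    (X : ℕ → Fin d → ℝ) (hX : IsSolIVP h α β (fun n x => A.mulVec x + γ n) xa x0 X) :
    ∀ n : ℕ, ∀ i, 0 ≤ X n i :=
  semilinear_ivp_positive_general h α β hh hα1 hβ1 d A hA γ hγ xa x0 hxa hx0 X hX
end
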